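/- For every instance (B, 𝓛, δ) of polyline bundle simplification and every choice of orientation of the polylines, the minimum size of a star cover is at most the minimum size of a valid simplification: OPT_StCo ≤ OPT_PBS. -/

import Mathlib

/-- Points of the Euclidean plane. -/
abbrev Pt := EuclideanSpace ℝ (Fin 2)

/-- The arc parametrization `c_L : [1, m] → ℝ²` of a polyline given by the list `L` of
its `m` bend points (1-based indexing):
`c_L(x) = (⌊x⌋ + 1 − x)·b_⌊x⌋ + (x − ⌊x⌋)·b_⌈x⌉`. -/
noncomputable def arcParam (L : List Pt) (x : ℝ) : Pt :=
  ((⌊x⌋₊ : ℝ) + 1 - x) • L.getD (⌊x⌋₊ - 1) 0 + (x - (⌊x⌋₊ : ℝ)) • L.getD (⌈x⌉₊ - 1) 0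

/-- The Fréchet distance between two polylines `L₁, L₂` (lists of points in the plane). -/
noncomputable def frechetDist (L₁ L₂ : List Pt) : ℝ :=
  sInf { d : ℝ | ∃ α β : ℝ → ℝ,
    ContinuousOn α (Set.Icc 0 1) ∧ ContinuousOn β (Set.Icc 0 1) ∧
    MonotoneOn α (Set.Icc 0 1) ∧ MonotoneOn β (Set.Icc 0 1) ∧
    α 0 = 1 ∧ β 0 = 1 ∧ α 1 = L₁.length ∧ β 1 = L₂.length ∧
    d = sSup { e : ℝ | ∃ t ∈ Set.Icc (0 : ℝ) 1,
          e = ‖arcParam L₁ (α t) - arcParam L₂ (β t)‖ } }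

/-- A polyline: a list of at least two bend points in which each bend appears at most
once. -/
structure Polyline where
  pts : List Pt
  two_le : 2 ≤ pts.length
  nodup : pts.Nodup

/-- An instance `(B, 𝓛, δ)` of polyline bundle simplification: a finite set `B` of bend
points, a bundle of `numLines` polylines whose bends all belong to `B`, and a positive
distance threshold `δ`. -/
structure PBSInstance where
  B : Finset Pt
  numLines : ℕ
  line : Fin numLines → Polyline
  δ : ℝ
  δ_pos : 0 < δ
  bends_mem : ∀ i : Fin numLines, ∀ p ∈ (line i).pts, p ∈ B

/-- `(u, v)` (0-based indices into `L`) is a valid shortcut of the polyline `L` with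
threshold `δ`: `u` comes before `v` and the Fréchet distance between the line segment
from `L[u]` to `L[v]` and the sub-polyline `L[u..v]` is at most `δ`. -/
def IsShortcut (δ : ℝ) (L : List Pt) (u v : ℕ) : Prop :=
  u < v ∧ v < L.length ∧
    frechetDist [L.getD u 0, L.getD v 0] ((L.drop u).take (v - u + 1)) ≤ δ

/-- `B'` is a valid simplification of the PBS instance `I` with threshold `δ`: `B' ⊆ B`,
every polyline keeps its start and end point, and every segment of the induced
simplification (i.e. every pair of retained bends with no retained bend in between) has
Fréchet distance at most `δ` to the corresponding sub-polyline. -/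
def IsValidSimplification (I : PBSInstance) (δ : ℝ) (B' : Set Pt) : Prop :=
  B' ⊆ ↑I.B ∧ ∀ i : Fin I.numLines,
    (I.line i).pts.getD 0 0 ∈ B' ∧
    (I.line i).pts.getD ((I.line i).pts.length - 1) 0 ∈ B' ∧
    ∀ p q : ℕ, p < q → q < (I.line i).pts.length →
      (I.line i).pts.getD p 0 ∈ B' → (I.line i).pts.getD q 0 ∈ B' →
      (∀ r : ℕ, p < r → r < q → (I.line i).pts.getD r 0 ∉ B') →
      frechetDist [(I.line i).pts.getD p 0, (I.line i).pts.getD q 0]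
        (((I.line i).pts.drop p).take (q - p + 1)) ≤ δ

/-- `OPT_PBS`: the minimum size of a valid simplification of the instance `I`. -/
noncomputable def optPBS (I : PBSInstance) : ℕ :=
  sInf { k : ℕ | ∃ B' : Set Pt, IsValidSimplification I I.δ B' ∧ B'.ncard = k }

/-- The `i`-th polyline of `I` after fixing an orientation: either the polyline itself or
its reversal. -/
def orientedLine (I : PBSInstance) (ori : Fin I.numLines → Bool) (i : Fin I.numLines) :
    List Pt :=
  if ori i then (I.line i).pts else (I.line i).pts.reverse

/-- A star: a central bend `central ∈ B` together with, for each polyline containing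
`central`, at most one incoming shortcut `(u, central)` (with respect to the fixed
orientations). -/
structure PBSStar (I : PBSInstance) (ori : Fin I.numLines → Bool) where
  central : Pt
  central_mem : central ∈ I.B
  sc : Fin I.numLines → Option ℕ
  sc_spec : ∀ i : Fin I.numLines, ∀ u : ℕ, sc i = some u →
    ∃ v : ℕ, v < (orientedLine I ori i).length ∧
      (orientedLine I ori i).getD v 0 = central ∧
      IsShortcut I.δ (orientedLine I ori i) u v

/-- The star `s` covers the segment–polyline pair given by polyline `i` and the segment
between positions `k` and `k+1` of the oriented polyline: `s` contains a shortcut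
`(u, central)` of polyline `i` and the segment lies between `u` and the position of
`central`. -/
def PBSStar.covers {I : PBSInstance} {ori : Fin I.numLines → Bool} (s : PBSStar I ori)
    (i : Fin I.numLines) (k : ℕ) : Prop :=
  ∃ u : ℕ, s.sc i = some u ∧
    ∃ v : ℕ, v < (orientedLine I ori i).length ∧
      (orientedLine I ori i).getD v 0 = s.central ∧ u ≤ k ∧ k < v

/-- A star cover: a set of stars covering all segment–polyline pairs of the instance. -/
def IsStarCover (I : PBSInstance) (ori : Fin I.numLines → Bool)
    (C : Set (PBSStar I ori)) : Prop :=
  ∀ i : Fin I.numLines, ∀ k : ℕ, k + 1 < (orientedLine I ori i).length →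
    ∃ s ∈ C, s.covers i k

/-- `OPT_StCo`: the minimum size of a star cover of the instance `I` with fixed
orientations `ori`. -/
noncomputable def optStCo (I : PBSInstance) (ori : Fin I.numLines → Bool) : ℕ :=
  sInf { k : ℕ | ∃ C : Set (PBSStar I ori), C.Finite ∧ IsStarCover I ori C ∧ C.ncard = k }

/-! Take an optimal simplification `B'`. Every retained bend `b` becomes the centre of a star
whose shortcut on each polyline through `b` starts at the previous retained bend; it is a
shortcut because consecutive retained bends span a segment of the simplification. A segment of
a polyline lies between the first retained bend after it and that bend's predecessor, so these
`|B'|` stars cover all segment–polyline pairs. Polylines oriented against their listed direction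
are handled by the invariance of the Fréchet distance under reversing both curves. -/

open Set

lemma arcParam_of_mem_Icc (L : List Pt) {k : ℕ} {x : ℝ} (hx : x ∈ Icc (k : ℝ) (k + 1)) :
    arcParam L x = ((k : ℝ) + 1 - x) • L.getD (k - 1) 0 + (x - k) • L.getD k 0 := by
  obtain ⟨hkx, hxk⟩ := hx
  rcases hkx.eq_or_lt with rfl | hkx
  · simp [arcParam]
  rcases hxk.eq_or_lt with rfl | hxk
  · have hfloor : ⌊(k : ℝ) + 1⌋₊ = k + 1 := by exact_mod_cast Nat.floor_natCast (k + 1)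
    have hceil : ⌈(k : ℝ) + 1⌉₊ = k + 1 := by exact_mod_cast Nat.ceil_natCast (k + 1)
    simp [arcParam, hfloor, hceil]
  have hfloor : ⌊x⌋₊ = k := (Nat.floor_eq_iff (k.cast_nonneg.trans hkx.le)).2 ⟨hkx.le, hxk⟩
  have hceil : ⌈x⌉₊ = k + 1 :=
    (Nat.ceil_eq_iff (by omega)).2 ⟨by simpa, by push_cast; exact hxk.le⟩
  simp [arcParam, hfloor, hceil]

lemma arcParam_reverse (L : List Pt) {x : ℝ} (hx : x ∈ Icc (1 : ℝ) L.length) :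
    arcParam L.reverse (L.length + 1 - x) = arcParam L x := by
  obtain ⟨h1x, hxm⟩ := hx
  have hm1 : 1 ≤ L.length := by exact_mod_cast h1x.trans hxm
  rcases hm1.eq_or_lt with hm1 | hm2
  · obtain ⟨a, rfl⟩ := List.length_eq_one_iff.1 hm1.symm
    obtain rfl : x = 1 := le_antisymm (by simpa using hxm) h1x
    norm_num
  obtain ⟨k, hk1, hkm, hkx, hxk⟩ : ∃ k : ℕ, 1 ≤ k ∧ k < L.length ∧ (k : ℝ) ≤ x ∧ x ≤ k + 1 := by
    rcases hxm.lt_or_eq with hxm | rfl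
    · exact ⟨⌊x⌋₊, Nat.le_floor (by simpa), (Nat.floor_lt (by linarith)).2 hxm,
        Nat.floor_le (by linarith), (Nat.lt_floor_add_one x).le⟩
    · exact ⟨L.length - 1, by omega, by omega, by rw [Nat.cast_sub hm1, Nat.cast_one]; linarith,
        by rw [Nat.cast_sub hm1, Nat.cast_one]; linarith⟩
  have hmk : ((L.length - k : ℕ) : ℝ) = L.length - k := by push_cast [hkm.le]; ring
  rw [arcParam_of_mem_Icc L ⟨hkx, hxk⟩, arcParam_of_mem_Icc L.reverse (k := L.length - k)
      ⟨by rw [hmk]; linarith, by rw [hmk]; linarith⟩,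
    List.getD_reverse _ (by omega), List.getD_reverse _ (by omega),
    show L.length - 1 - (L.length - k - 1) = k by omega,
    show L.length - 1 - (L.length - k) = k - 1 by omega, hmk, add_comm]
  congr 2 <;> ring

def frechetCandidates (L₁ L₂ : List Pt) : Set ℝ :=
  { d : ℝ | ∃ α β : ℝ → ℝ,
    ContinuousOn α (Set.Icc 0 1) ∧ ContinuousOn β (Set.Icc 0 1) ∧
    MonotoneOn α (Set.Icc 0 1) ∧ MonotoneOn β (Set.Icc 0 1) ∧
    α 0 = 1 ∧ β 0 = 1 ∧ α 1 = L₁.length ∧ β 1 = L₂.length ∧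
    d = sSup { e : ℝ | ∃ t ∈ Set.Icc (0 : ℝ) 1,
          e = ‖arcParam L₁ (α t) - arcParam L₂ (β t)‖ } }

lemma frechetDist_eq_sInf (L₁ L₂ : List Pt) :
    frechetDist L₁ L₂ = sInf (frechetCandidates L₁ L₂) := rfl

lemma nonneg_of_mem_frechetCandidates {L₁ L₂ : List Pt} {d : ℝ}
    (hd : d ∈ frechetCandidates L₁ L₂) : 0 ≤ d := by
  obtain ⟨α, β, -, -, -, -, -, -, -, -, rfl⟩ := hd
  exact Real.sSup_nonneg (by rintro e ⟨t, -, rfl⟩; positivity)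

lemma frechetDist_self {L : List Pt} (hL : L ≠ []) : frechetDist L L = 0 := by
  have hlen : (1 : ℝ) ≤ L.length := by exact_mod_cast List.length_pos_iff.2 hL
  set γ : ℝ → ℝ := fun t => 1 + t * ((L.length : ℝ) - 1)
  have hγ : Monotone γ := monotone_const.add (monotone_id.mul_const (by linarith))
  have hzero :
      { e : ℝ | ∃ t ∈ Icc (0 : ℝ) 1, e = ‖arcParam L (γ t) - arcParam L (γ t)‖ } = {0} := by
    ext e
    simpa using fun _ => ⟨0, by norm_num⟩
  refine le_antisymm (csInf_le ⟨0, fun _ => nonneg_of_mem_frechetCandidates⟩ ?_)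
    (Real.sInf_nonneg fun _ => nonneg_of_mem_frechetCandidates)
  exact ⟨γ, γ, by fun_prop, by fun_prop, hγ.monotoneOn _, hγ.monotoneOn _, by simp [γ],
    by simp [γ], by simp [γ], by simp [γ], by rw [hzero, csSup_singleton]⟩

def IsParametrization (L : List Pt) (γ : ℝ → ℝ) : Prop :=
  ContinuousOn γ (Icc 0 1) ∧ MonotoneOn γ (Icc 0 1) ∧ γ 0 = 1 ∧ γ 1 = L.length

namespace IsParametrization

variable {L : List Pt} {γ : ℝ → ℝ}

lemma mem_Icc (hγ : IsParametrization L γ) {t : ℝ} (ht : t ∈ Icc (0 : ℝ) 1) :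
    γ t ∈ Icc (1 : ℝ) L.length := by
  obtain ⟨-, hm, h0, h1⟩ := hγ
  exact ⟨h0 ▸ hm ⟨le_rfl, zero_le_one⟩ ht ht.1, h1 ▸ hm ht ⟨zero_le_one, le_rfl⟩ ht.2⟩

lemma reverse (hγ : IsParametrization L γ) :
    IsParametrization L.reverse (fun t => L.length + 1 - γ (1 - t)) := by
  obtain ⟨hc, hm, h0, h1⟩ := hγ
  have hflip : MapsTo (fun t : ℝ => 1 - t) (Icc 0 1) (Icc 0 1) :=
    fun t ht => ⟨by linarith [ht.2], by linarith [ht.1]⟩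
  refine ⟨continuousOn_const.sub (hc.comp (by fun_prop) hflip), ?_, by simp [h1], by simp [h0]⟩
  intro a ha b hb hab
  have := hm (hflip hb) (hflip ha) (by linarith)
  dsimp only
  linarith

end IsParametrization

lemma frechetCandidates_subset_reverse (L₁ L₂ : List Pt) :
    frechetCandidates L₁ L₂ ⊆ frechetCandidates L₁.reverse L₂.reverse := by
  rintro d ⟨α, β, hcα, hcβ, hmα, hmβ, hα0, hβ0, hα1, hβ1, rfl⟩
  have hα : IsParametrization L₁ α := ⟨hcα, hmα, hα0, hα1⟩
  have hβ : IsParametrization L₂ β := ⟨hcβ, hmβ, hβ0, hβ1⟩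
  obtain ⟨hcα', hmα', hα0', hα1'⟩ := hα.reverse
  obtain ⟨hcβ', hmβ', hβ0', hβ1'⟩ := hβ.reverse
  refine ⟨_, _, hcα', hcβ', hmα', hmβ', hα0', hβ0', hα1', hβ1', ?_⟩
  have hflip : ∀ t ∈ Icc (0 : ℝ) 1, 1 - t ∈ Icc (0 : ℝ) 1 :=
    fun t ht => ⟨by linarith [ht.2], by linarith [ht.1]⟩
  have hrev : ∀ t ∈ Icc (0 : ℝ) 1,
      ‖arcParam L₁.reverse (L₁.length + 1 - α (1 - t)) -
          arcParam L₂.reverse (L₂.length + 1 - β (1 - t))‖ =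
        ‖arcParam L₁ (α (1 - t)) - arcParam L₂ (β (1 - t))‖ := by
    intro t ht
    rw [arcParam_reverse L₁ (hα.mem_Icc (hflip t ht)),
      arcParam_reverse L₂ (hβ.mem_Icc (hflip t ht))]
  congr 1
  ext e
  constructor
  · rintro ⟨t, ht, rfl⟩
    exact ⟨1 - t, hflip t ht, by rw [hrev _ (hflip t ht), sub_sub_cancel]⟩
  · rintro ⟨t, ht, rfl⟩
    exact ⟨1 - t, hflip t ht, hrev t ht⟩

lemma frechetDist_reverse (L₁ L₂ : List Pt) :
    frechetDist L₁.reverse L₂.reverse = frechetDist L₁ L₂ := by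
  have h := frechetCandidates_subset_reverse L₁.reverse L₂.reverse
  rw [List.reverse_reverse, List.reverse_reverse] at h
  rw [frechetDist_eq_sInf, frechetDist_eq_sInf,
    h.antisymm (frechetCandidates_subset_reverse L₁ L₂)]

lemma List.reverse_drop_take {α : Type*} (L : List α) {p n : ℕ} (h : p + n ≤ L.length) :
    (L.reverse.drop p).take n = ((L.drop (L.length - p - n)).take n).reverse := by
  rw [List.drop_reverse, List.take_reverse, List.drop_take, List.length_take,
    min_eq_left (by omega), show L.length - p - (L.length - p - n) = n by omega]

def IsValidLineSimplification (δ : ℝ) (B' : Set Pt) (L : List Pt) : Prop :=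
  L.getD 0 0 ∈ B' ∧ L.getD (L.length - 1) 0 ∈ B' ∧
    ∀ p q : ℕ, p < q → q < L.length → L.getD p 0 ∈ B' → L.getD q 0 ∈ B' →
      (∀ r : ℕ, p < r → r < q → L.getD r 0 ∉ B') →
      frechetDist [L.getD p 0, L.getD q 0] ((L.drop p).take (q - p + 1)) ≤ δ

lemma isValidSimplification_iff {I : PBSInstance} {δ : ℝ} {B' : Set Pt} :
    IsValidSimplification I δ B' ↔
      B' ⊆ I.B ∧ ∀ i, IsValidLineSimplification δ B' (I.line i).pts :=
  Iff.rfl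

lemma IsValidLineSimplification.reverse {δ : ℝ} {B' : Set Pt} {L : List Pt}
    (h : IsValidLineSimplification δ B' L) : IsValidLineSimplification δ B' L.reverse := by
  obtain rfl | hL := eq_or_ne L []
  · simpa using h
  obtain ⟨hstart, hend, hseg⟩ := h
  have hlen := List.length_pos_iff.2 hL
  have hrev : ∀ r < L.length, L.reverse.getD r 0 = L.getD (L.length - 1 - r) 0 :=
    fun r hr => congrFun (List.getD_reverse r hr) 0
  refine ⟨by rwa [hrev 0 hlen, Nat.sub_zero], ?_, ?_⟩
  · rwa [List.length_reverse, hrev _ (by omega), Nat.sub_self]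
  intro p q hpq hq hp hq' hgap
  rw [List.length_reverse] at hq
  rw [hrev p (by omega)] at hp ⊢
  rw [hrev q hq] at hq' ⊢
  have hgap' : ∀ r, L.length - 1 - q < r → r < L.length - 1 - p → L.getD r 0 ∉ B' := by
    intro r hr₁ hr₂
    have := hgap (L.length - 1 - r) (by omega) (by omega)
    rwa [hrev _ (by omega), show L.length - 1 - (L.length - 1 - r) = r by omega] at this
  have key := hseg (L.length - 1 - q) (L.length - 1 - p) (by omega) (by omega) hq' hp hgap'
  rw [show L.length - 1 - p - (L.length - 1 - q) + 1 = q - p + 1 by omega] at key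
  rw [← frechetDist_reverse, List.reverse_drop_take L (by omega),
    show L.length - p - (q - p + 1) = L.length - 1 - q by omega]
  simpa using key

lemma isValidSimplification_B (I : PBSInstance) {δ : ℝ} (hδ : 0 ≤ δ) :
    IsValidSimplification I δ I.B := by
  refine isValidSimplification_iff.2 ⟨subset_rfl, fun i => ?_⟩
  set L := (I.line i).pts
  have hlen : 2 ≤ L.length := (I.line i).two_le
  have hmem : ∀ r < L.length, L.getD r 0 ∈ (I.B : Set Pt) := fun r hr => by
    rw [List.getD_eq_getElem _ _ hr]
    exact I.bends_mem i _ (List.getElem_mem hr)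
  refine ⟨hmem 0 (by omega), hmem _ (by omega), fun p q hpq hq _ _ hgap => ?_⟩
  obtain rfl : q = p + 1 := by
    by_contra hne
    exact hgap (p + 1) (by omega) (by omega) (hmem (p + 1) (by omega))
  have hslice : (L.drop p).take (p + 1 - p + 1) = [L.getD p 0, L.getD (p + 1) 0] := by
    rw [show p + 1 - p + 1 = 2 by omega, List.drop_eq_getElem_cons (by omega),
      List.drop_eq_getElem_cons hq, List.getD_eq_getElem _ _ hq,
      List.getD_eq_getElem _ _ (by omega)]
    rfl
  rw [hslice, frechetDist_self (List.cons_ne_nil _ _)]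
  exact hδ

lemma isValidLineSimplification_orientedLine {I : PBSInstance} {δ : ℝ} {B' : Set Pt}
    (hB' : IsValidSimplification I δ B') (ori : Fin I.numLines → Bool) (i : Fin I.numLines) :
    IsValidLineSimplification δ B' (orientedLine I ori i) := by
  have hline := (isValidSimplification_iff.1 hB').2 i
  unfold orientedLine
  split
  · exact hline
  · exact hline.reverse

lemma orientedLine_nodup (I : PBSInstance) (ori : Fin I.numLines → Bool) (i : Fin I.numLines) :
    (orientedLine I ori i).Nodup := by
  unfold orientedLine
  split
  · exact (I.line i).nodup
  · exact List.nodup_reverse.2 (I.line i).nodup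

section prevRetained

open Classical

variable {δ : ℝ} {B' : Set Pt} {L : List Pt} {q : ℕ}

noncomputable def prevRetained (B' : Set Pt) (L : List Pt) (q : ℕ) : ℕ :=
  Nat.findGreatest (fun r => L.getD r 0 ∈ B') (q - 1)

lemma prevRetained_lt (hq : 0 < q) : prevRetained B' L q < q := by
  have := Nat.findGreatest_le (P := fun r => L.getD r 0 ∈ B') (q - 1)
  unfold prevRetained
  omega

lemma getD_prevRetained_mem (h0 : L.getD 0 0 ∈ B') : L.getD (prevRetained B' L q) 0 ∈ B' :=
  Nat.findGreatest_spec (P := fun r => L.getD r 0 ∈ B') (Nat.zero_le _) h0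

lemma getD_not_mem_of_prevRetained_lt {r : ℕ} (hr : prevRetained B' L q < r) (hrq : r < q) :
    L.getD r 0 ∉ B' :=
  Nat.findGreatest_is_greatest hr (by omega)

lemma IsValidLineSimplification.isShortcut_prevRetained (h : IsValidLineSimplification δ B' L)
    (hq0 : 0 < q) (hq : q < L.length) (hqB : L.getD q 0 ∈ B') :
    IsShortcut δ L (prevRetained B' L q) q :=
  ⟨prevRetained_lt hq0, hq, h.2.2 _ q (prevRetained_lt hq0) hq (getD_prevRetained_mem h.1) hqB
    fun _ => getD_not_mem_of_prevRetained_lt⟩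

lemma IsValidLineSimplification.exists_prevRetained_le_lt (h : IsValidLineSimplification δ B' L)
    {k : ℕ} (hk : k + 1 < L.length) :
    ∃ q < L.length, L.getD q 0 ∈ B' ∧ prevRetained B' L q ≤ k ∧ k < q := by
  have hex : ∃ r, k < r ∧ L.getD r 0 ∈ B' := ⟨L.length - 1, by omega, h.2.1⟩
  obtain ⟨hkq, hqB⟩ := Nat.find_spec hex
  have hqlen : Nat.find hex ≤ L.length - 1 := Nat.find_min' hex ⟨by omega, h.2.1⟩
  refine ⟨Nat.find hex, by omega, hqB, ?_, hkq⟩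
  by_contra! hlt
  exact Nat.find_min hex (prevRetained_lt (by omega)) ⟨hlt, getD_prevRetained_mem h.1⟩

end prevRetained

section starAt

open Classical

variable {I : PBSInstance} {ori : Fin I.numLines → Bool} {B' : Set Pt}

noncomputable def starAt (hB' : IsValidSimplification I I.δ B') (b : Pt) (hb : b ∈ B') :
    PBSStar I ori where
  central := b
  central_mem := hB'.1 hb
  sc i :=
    if b ∈ orientedLine I ori i ∧ 0 < (orientedLine I ori i).idxOf b then
      some (prevRetained B' (orientedLine I ori i) ((orientedLine I ori i).idxOf b))
    else none
  sc_spec i u hu := by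
    split_ifs at hu with hbi
    obtain rfl := Option.some_inj.1 hu
    have hlt := List.idxOf_lt_length_of_mem hbi.1
    have hget : (orientedLine I ori i).getD ((orientedLine I ori i).idxOf b) 0 = b := by
      rw [List.getD_eq_getElem _ _ hlt, List.getElem_idxOf]
    exact ⟨_, hlt, hget, (isValidLineSimplification_orientedLine hB' ori i).isShortcut_prevRetained
      hbi.2 hlt (by rw [hget]; exact hb)⟩

lemma starAt_sc (hB' : IsValidSimplification I I.δ B') (i : Fin I.numLines) {q : ℕ}
    (hq0 : 0 < q) (hq : q < (orientedLine I ori i).length)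
    (hqB : (orientedLine I ori i).getD q 0 ∈ B') :
    (starAt (ori := ori) hB' _ hqB).sc i = some (prevRetained B' (orientedLine I ori i) q) := by
  have hidx : (orientedLine I ori i).idxOf ((orientedLine I ori i).getD q 0) = q := by
    rw [List.getD_eq_getElem _ _ hq]
    exact (orientedLine_nodup I ori i).idxOf_getElem q hq
  have hmem : (orientedLine I ori i).getD q 0 ∈ orientedLine I ori i := by
    rw [List.getD_eq_getElem _ _ hq]
    exact List.getElem_mem hq
  simp only [starAt, hidx, if_pos (And.intro hmem hq0)]

lemma isStarCover_range_starAt (hB' : IsValidSimplification I I.δ B') :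
    IsStarCover I ori (range fun b : B' => starAt hB' b.1 b.2) := by
  intro i k hk
  obtain ⟨q, hq, hqB, hprev, hkq⟩ :=
    (isValidLineSimplification_orientedLine hB' ori i).exists_prevRetained_le_lt hk
  exact ⟨_, ⟨⟨_, hqB⟩, rfl⟩, _, starAt_sc hB' i (by omega) hq hqB, q, hq, rfl, hprev, hkq⟩

end starAt

/-- Lemma 4.1: for every PBS instance and every choice of orientations, the minimum size
of a star cover is at most the minimum size of a valid simplification:
`OPT_StCo ≤ OPT_PBS`. -/
theorem optStCo_le_optPBS (I : PBSInstance) (ori : Fin I.numLines → Bool) :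
    optStCo I ori ≤ optPBS I := by
  obtain ⟨B', hB', hcard⟩ : optPBS I ∈
      { k : ℕ | ∃ B' : Set Pt, IsValidSimplification I I.δ B' ∧ B'.ncard = k } :=
    Nat.sInf_mem ⟨_, I.B, isValidSimplification_B I I.δ_pos.le, rfl⟩
  have : Finite B' := (I.B.finite_toSet.subset hB'.1).to_subtype
  let stars : B' → PBSStar I ori := fun b => starAt hB' b.1 b.2
  calc optStCo I ori ≤ (range stars).ncard :=
        Nat.sInf_le ⟨_, finite_range stars, isStarCover_range_starAt hB', rfl⟩
    _ ≤ B'.ncard := Finite.card_range_le stars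
    _ = optPBS I := hcard
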